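/- Let p = 2p'+1 and q = 2q'+1 be distinct safe primes with p', q' distinct odd primes, N = pq. If x ∈ (Z/NZ)* is a uniformly random element, the probability that ord(x) is divisible by p'q' is at least 1 - 1/p' - 1/q' (so the RSW sequence of a random x has large order except with small probability). -/

import Mathlib

/-!
The elements of a finite abelian group `G` whose order is prime to a prime `r` all lie in the
kernel of `x ↦ x ^ m`, where `m` is the prime-to-`r` part of `|G|`; by Cauchy's theorem this
kernel has order prime to `r`, hence at most `m ≤ |G| / r` when `r ∣ |G|`. For
`G = (ℤ/Nℤ)ˣ` both `p'` and `q'` divide `|G| = φ(N)`, and a union bound over the two bad sets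
gives the claim.
-/

theorem card_le_card_mul_dvd_add_card_not_dvd {α : Type*} [Finite α] (f : α → ℕ) {a b : ℕ}
    (hab : a.Coprime b) :
    Nat.card α ≤ Nat.card {x // a * b ∣ f x} + Nat.card {x // ¬ a ∣ f x} +
      Nat.card {x // ¬ b ∣ f x} := by
  have hcover : (Set.univ : Set α) ⊆ {x | a * b ∣ f x} ∪ {x | ¬ a ∣ f x} ∪ {x | ¬ b ∣ f x} :=
    fun x _ => by
      by_cases hax : a ∣ f x <;> by_cases hbx : b ∣ f x <;> simp_all [hab.mul_dvd_of_dvd_of_dvd]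
  calc Nat.card α = (Set.univ : Set α).ncard := (Set.ncard_univ α).symm
    _ ≤ ({x | a * b ∣ f x} ∪ {x | ¬ a ∣ f x} ∪ {x | ¬ b ∣ f x}).ncard := Set.ncard_le_ncard hcover
    _ ≤ _ := (Set.ncard_union_le _ _).trans (Nat.add_le_add_right (Set.ncard_union_le _ _) _)

section OrderDivisibility

variable {G : Type*} [CommGroup G] [Finite G] {r : ℕ}

theorem card_not_dvd_orderOf_le_ordCompl (hr : r.Prime) :
    Nat.card {x : G // ¬ r ∣ orderOf x} ≤ Nat.card G / r ^ (Nat.card G).factorization r := by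
  have : Fact r.Prime := ⟨hr⟩
  set m := Nat.card G / r ^ (Nat.card G).factorization r
  have hG : Nat.card G = r ^ (Nat.card G).factorization r * m :=
    (Nat.ordProj_mul_ordCompl_eq_self _ _).symm
  have hcop : ∀ {k : ℕ}, ¬ r ∣ k → k.Coprime (r ^ (Nat.card G).factorization r) :=
    fun hk => (Nat.Coprime.pow_left _ ((hr.coprime_iff_not_dvd).2 hk)).symm
  let H := (powMonoidHom m : G →* G).ker
  have hbad : ∀ x : {x : G // ¬ r ∣ orderOf x}, (x : G) ∈ H := fun ⟨x, hx⟩ =>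
    orderOf_dvd_iff_pow_eq_one.1 <| (hcop hx).dvd_of_dvd_mul_left (hG ▸ orderOf_dvd_natCard x)
  have hH : ¬ r ∣ Nat.card H := fun hrH => by
    obtain ⟨y, hy⟩ := exists_prime_orderOf_dvd_card' r hrH
    have hym : (y : G) ^ m = 1 := y.2
    exact Nat.not_dvd_ordCompl hr Nat.card_pos.ne' <|
      hy ▸ Subgroup.orderOf_coe y ▸ orderOf_dvd_of_pow_eq_one hym
  calc Nat.card {x : G // ¬ r ∣ orderOf x}
      ≤ Nat.card H := Nat.card_le_card_of_injective (fun x => ⟨x, hbad x⟩)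
          fun _ _ hxy => Subtype.ext (congrArg (fun z : H => (z : G)) hxy)
    _ ≤ m := Nat.le_of_dvd (Nat.ordCompl_pos r Nat.card_pos.ne') <|
          (hcop hH).dvd_of_dvd_mul_left (hG ▸ Subgroup.card_subgroup_dvd_card H)

theorem card_not_dvd_orderOf_mul_le (hr : r.Prime) (hrG : r ∣ Nat.card G) :
    Nat.card {x : G // ¬ r ∣ orderOf x} * r ≤ Nat.card G := by
  have hr_le : r ≤ r ^ (Nat.card G).factorization r :=
    Nat.le_self_pow (hr.factorization_pos_of_dvd Nat.card_pos.ne' hrG).ne' r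
  calc Nat.card {x : G // ¬ r ∣ orderOf x} * r
      ≤ Nat.card G / r ^ (Nat.card G).factorization r * r ^ (Nat.card G).factorization r :=
        Nat.mul_le_mul (card_not_dvd_orderOf_le_ordCompl hr) hr_le
    _ = Nat.card G := Nat.div_mul_cancel (Nat.ordProj_dvd _ _)

theorem le_card_dvd_orderOf_mul_div_card {a b : ℕ} (ha : a.Prime) (hb : b.Prime) (hab : a ≠ b)
    (haG : a ∣ Nat.card G) (hbG : b ∣ Nat.card G) :
    (1 : ℚ) - 1 / a - 1 / b ≤
      (Nat.card {x : G // a * b ∣ orderOf x} : ℚ) / (Nat.card G : ℚ) := by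
  have hunion := card_le_card_mul_dvd_add_card_not_dvd (orderOf : G → ℕ)
    ((Nat.coprime_primes ha hb).2 hab)
  have hbad {r : ℕ} (hr : r.Prime) (hrG : r ∣ Nat.card G) :
      (Nat.card {x : G // ¬ r ∣ orderOf x} : ℚ) ≤ Nat.card G / r := by
    rw [le_div_iff₀ (by exact_mod_cast hr.pos)]
    exact_mod_cast card_not_dvd_orderOf_mul_le hr hrG
  have hbad_a := hbad ha haG
  have hbad_b := hbad hb hbG
  rw [le_div_iff₀ (by exact_mod_cast Nat.card_pos)]
  calc ((1 : ℚ) - 1 / a - 1 / b) * Nat.card G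
      = Nat.card G - Nat.card G / a - Nat.card G / b := by ring
    _ ≤ Nat.card {x : G // a * b ∣ orderOf x} := by
      have : (Nat.card G : ℚ) ≤ Nat.card {x : G // a * b ∣ orderOf x} +
          Nat.card {x : G // ¬ a ∣ orderOf x} + Nat.card {x : G // ¬ b ∣ orderOf x} := by
        exact_mod_cast hunion
      linarith

end OrderDivisibility

theorem dvd_totient_of_prime_eq_two_mul_add_one {p p' N : ℕ} (hp : p.Prime) (hpe : p = 2 * p' + 1)
    (hpN : p ∣ N) : p' ∣ N.totient :=
  (Dvd.intro_left 2 (by rw [Nat.totient_prime hp, hpe]; simp)).trans (Nat.totient_dvd_of_dvd hpN)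

theorem random_element_large_order_general (p q p' q' : ℕ)
    (hp : p.Prime) (hq : q.Prime) (hp' : p'.Prime) (hq' : q'.Prime)
    (hne' : p' ≠ q')
    (hpe : p = 2 * p' + 1) (hqe : q = 2 * q' + 1)
    (N : ℕ) (hN : N = p * q) :
    (1 : ℚ) - 1 / p' - 1 / q' ≤
      (Nat.card {x : (ZMod N)ˣ // p' * q' ∣ orderOf x} : ℚ) /
        (Nat.card (ZMod N)ˣ : ℚ) := by
  have : NeZero N := ⟨hN ▸ Nat.mul_ne_zero hp.ne_zero hq.ne_zero⟩
  have hcard : Nat.card (ZMod N)ˣ = N.totient := by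
    rw [Nat.card_eq_fintype_card, ZMod.card_units_eq_totient]
  exact le_card_dvd_orderOf_mul_div_card hp' hq' hne'
    (hcard ▸ dvd_totient_of_prime_eq_two_mul_add_one hp hpe (hN ▸ dvd_mul_right p q))
    (hcard ▸ dvd_totient_of_prime_eq_two_mul_add_one hq hqe (hN ▸ dvd_mul_left q p))

theorem random_element_large_order (p q p' q' : ℕ)
    (hp : p.Prime) (hq : q.Prime) (hp' : p'.Prime) (hq' : q'.Prime)
    (hop : Odd p') (hoq : Odd q') (hne' : p' ≠ q')
    (hpe : p = 2 * p' + 1) (hqe : q = 2 * q' + 1) (hne : p ≠ q)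
    (N : ℕ) (hN : N = p * q) :
    (1 : ℚ) - 1 / p' - 1 / q' ≤
      (Nat.card {x : (ZMod N)ˣ // p' * q' ∣ orderOf x} : ℚ) /
        (Nat.card (ZMod N)ˣ : ℚ) :=
  random_element_large_order_general p q p' q' hp hq hp' hq' hne' hpe hqe N hN
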